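/- arXiv:funct-an/9712005 — 7 statements merged into one kernel-verified Lean document; each statement's English description precedes it below -/
import Mathlib

section
/- Let 𝕜 be ℝ or ℂ and let A be a unital associative 𝕜-algebra which is also an inner product space over 𝕜 whose unit e₀ satisfies ‖e₀‖ = 1. Suppose there exists f ∈ A with f ≠ 0 such that ⟪e₀, f⟫ = 0, ⟪f, f·f⟫ = 0, and Re⟪e₀, f·f⟫ ≥ 0. Then for every real constant γ with γ < √(4/3) there exist a, b ∈ A such that ‖a·b‖ > γ·‖a‖·‖b‖. -/
/-! Put `a = e + u` with `u` a real multiple of `f` and `‖u‖² = 1/2`. Unitality gives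
`a·a = (e + u·u) + 2u`; the hypotheses give `e ⊥ u`, `(e + u·u) ⊥ u` and `‖e + u·u‖ ≥ ‖e‖ = 1`.
By Pythagoras `‖a‖² = 3/2` while `‖a·a‖² ≥ 1 + 4‖u‖² = 3 = (4/3)‖a‖⁴`. -/

open RCLike (re)

section

variable {𝕜 A : Type*} [RCLike 𝕜] [NormedAddCommGroup A] [InnerProductSpace 𝕜 A]

theorem norm_sq_le_norm_add_sq_of_re_inner_nonneg {x y : A} (h : 0 ≤ re (inner 𝕜 x y)) :
    ‖x‖ ^ 2 ≤ ‖x + y‖ ^ 2 := by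
  rw [norm_add_sq (𝕜 := 𝕜)]
  nlinarith [sq_nonneg ‖y‖]

variable (mul : A →ₗ[𝕜] A →ₗ[𝕜] A) {e : A} (hel : ∀ a : A, mul e a = a)
  (her : ∀ a : A, mul a e = a)
include hel her

theorem mul_unit_add_self (u : A) : mul (e + u) (e + u) = (e + mul u u) + (2 : 𝕜) • u := by
  simp only [map_add, LinearMap.add_apply, hel, her]
  module

theorem one_add_four_mul_norm_sq_le_norm_mul_unit_add_self_sq (he : ‖e‖ = 1) {u : A}
    (h1 : inner 𝕜 e u = 0) (h2 : inner 𝕜 u (mul u u) = 0) (h3 : 0 ≤ re (inner 𝕜 e (mul u u))) :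
    1 + 4 * ‖u‖ ^ 2 ≤ ‖mul (e + u) (e + u)‖ ^ 2 := by
  have h_orth : inner 𝕜 (e + mul u u) ((2 : 𝕜) • u) = 0 := by
    rw [inner_add_left, inner_smul_right, inner_smul_right, h1, ← inner_conj_symm, h2]
    simp
  have h_unit : 1 ≤ ‖e + mul u u‖ ^ 2 := by
    simpa [he] using norm_sq_le_norm_add_sq_of_re_inner_nonneg h3
  have h_two : ‖(2 : 𝕜) • u‖ ^ 2 = 4 * ‖u‖ ^ 2 := by
    rw [norm_smul, RCLike.norm_two]
    ring
  rw [mul_unit_add_self mul hel her, norm_add_sq (𝕜 := 𝕜), h_orth, map_zero, h_two]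
  linarith

end

theorem lt_of_sq_mul_sq_le_sq {γ c x y : ℝ} (hγ : γ < c) (hx : 0 < x) (hy : 0 ≤ y)
    (h : c ^ 2 * x ^ 2 ≤ y ^ 2) : γ * x < y :=
  calc γ * x < c * x := mul_lt_mul_of_pos_right hγ hx
    _ ≤ y := le_of_sq_le_sq (by rwa [mul_pow]) hy

theorem no_submultiplicative_hilbert_norm_with_constant_lt_sqrt_four_thirds_general
    {𝕜 : Type*} [RCLike 𝕜] {A : Type*} [NormedAddCommGroup A] [InnerProductSpace 𝕜 A]
    (mul : A →ₗ[𝕜] A →ₗ[𝕜] A)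
    (e : A) (hel : ∀ a : A, mul e a = a) (her : ∀ a : A, mul a e = a)
    (he : ‖e‖ = 1)
    (f : A) (hf : f ≠ 0)
    (h1 : (inner 𝕜 e f : 𝕜) = 0)
    (h2 : (inner 𝕜 f (mul f f) : 𝕜) = 0)
    (h3 : 0 ≤ RCLike.re (inner 𝕜 e (mul f f) : 𝕜)) :
    ∀ γ : ℝ, γ < Real.sqrt (4 / 3) → ∃ a b : A, γ * ‖a‖ * ‖b‖ < ‖mul a b‖ := by
  intro γ hγ
  set t : ℝ := (Real.sqrt 2 * ‖f‖)⁻¹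
  set u : A := (t : 𝕜) • f
  have hu : ‖u‖ ^ 2 = 1 / 2 := by
    have hf_norm : ‖f‖ ≠ 0 := norm_ne_zero_iff.mpr hf
    simp only [u, t, norm_smul, RCLike.norm_ofReal, mul_pow, sq_abs, inv_pow,
      Real.sq_sqrt zero_le_two]
    field_simp
  have huu : mul u u = ((t ^ 2 : ℝ) : 𝕜) • mul f f := by
    simp only [u, map_smul, LinearMap.smul_apply, smul_smul]
    push_cast; ring_nf
  have he_u : inner 𝕜 e u = 0 := by simp [u, inner_smul_right, h1]
  have h_bound := one_add_four_mul_norm_sq_le_norm_mul_unit_add_self_sq mul hel her he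
    (u := u) he_u (by rw [huu]; simp [u, inner_smul_left, inner_smul_right, h2])
    (by rw [huu, inner_smul_right, RCLike.re_ofReal_mul]; positivity)
  have h_norm : ‖e + u‖ ^ 2 = 3 / 2 := by
    rw [norm_add_sq (𝕜 := 𝕜), he_u, map_zero, he, hu]
    norm_num
  refine ⟨e + u, e + u, ?_⟩
  rw [mul_assoc, ← sq]
  refine lt_of_sq_mul_sq_le_sq hγ (by rw [h_norm]; norm_num) (norm_nonneg _) ?_
  rw [h_norm, Real.sq_sqrt (by norm_num)]
  linarith

/-- **Theorem 1 (no-go theorem).** Let `𝕜` be `ℝ` or `ℂ` and let `A` be a unital associative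
`𝕜`-algebra (given by a bilinear multiplication `mul` with two-sided unit `e`) which is also an
inner product space over `𝕜` whose unit satisfies `‖e‖ = 1`.  If there exists `f ≠ 0` with
`⟪e, f⟫ = 0`, `⟪f, f·f⟫ = 0` and `Re ⟪e, f·f⟫ ≥ 0`, then for every real `γ < √(4/3)` there are
`a, b` with `‖a·b‖ > γ·‖a‖·‖b‖`. -/
theorem no_submultiplicative_hilbert_norm_with_constant_lt_sqrt_four_thirds
    {𝕜 : Type*} [RCLike 𝕜] {A : Type*} [NormedAddCommGroup A] [InnerProductSpace 𝕜 A]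
    (mul : A →ₗ[𝕜] A →ₗ[𝕜] A)
    (hassoc : ∀ a b c : A, mul (mul a b) c = mul a (mul b c))
    (e : A) (hel : ∀ a : A, mul e a = a) (her : ∀ a : A, mul a e = a)
    (he : ‖e‖ = 1)
    (f : A) (hf : f ≠ 0)
    (h1 : (inner 𝕜 e f : 𝕜) = 0)
    (h2 : (inner 𝕜 f (mul f f) : 𝕜) = 0)
    (h3 : 0 ≤ RCLike.re (inner 𝕜 e (mul f f) : 𝕜)) :
    ∀ γ : ℝ, γ < Real.sqrt (4 / 3) → ∃ a b : A, γ * ‖a‖ * ‖b‖ < ‖mul a b‖ :=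
  no_submultiplicative_hilbert_norm_with_constant_lt_sqrt_four_thirds_general mul e hel her he f hf
    h1 h2 h3
end

section
/- Let 𝕜 be ℝ or ℂ and let A be a unital associative 𝕜-algebra which is also an inner product space over 𝕜 whose unit e₀ satisfies ‖e₀‖ = 1. Suppose there exists f ∈ A with f ≠ 0 and f·f = 0. Then there exist a, b ∈ A such that ‖a·b‖ > ‖a‖·‖b‖, i.e. the norm is not submultiplicative. -/
/-!
For `a = e + t • f` the relation `f * f = 0` gives `a * a = e + 2t • f`, while
`q s = ‖e + s • f‖² = 1 + 2sc + s²‖f‖²` with `c = re ⟪e, f⟫`. Since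
`q (2t) - q t ^ 2 = t² (2‖f‖² - (2c + t‖f‖²)²)`, taking `t ≠ 0` near `-2c / ‖f‖²` makes
`‖a‖ * ‖a‖ < ‖a * a‖`.
-/

lemma mul_self_add_smul_of_mul_self_eq_zero {R M : Type*} [CommSemiring R] [AddCommMonoid M]
    [Module R M] (mul : M →ₗ[R] M →ₗ[R] M) {e f : M} (hel : ∀ a, mul e a = a)
    (her : ∀ a, mul a e = a) (hff : mul f f = 0) (t : R) :
    mul (e + t • f) (e + t • f) = e + (2 * t) • f := by
  simp only [map_add, map_smul, LinearMap.add_apply, LinearMap.smul_apply, hel, her, hff,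
    smul_zero, add_zero, two_mul, add_smul, add_assoc]

lemma norm_add_ofReal_smul_sq {𝕜 E : Type*} [RCLike 𝕜] [NormedAddCommGroup E]
    [InnerProductSpace 𝕜 E] (x y : E) (t : ℝ) :
    ‖x + (t : 𝕜) • y‖ ^ 2 = ‖x‖ ^ 2 + 2 * t * RCLike.re (inner 𝕜 x y) + t ^ 2 * ‖y‖ ^ 2 := by
  rw [@norm_add_sq 𝕜, inner_smul_right, RCLike.re_ofReal_mul, norm_smul, RCLike.norm_ofReal,
    mul_pow, sq_abs]
  ring

lemma exists_sq_quadratic_lt_quadratic_two_mul (c : ℝ) {r : ℝ} (hr : 0 < r) :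
    ∃ t : ℝ, (1 + 2 * t * c + t ^ 2 * r ^ 2) ^ 2 < 1 + 2 * (2 * t) * c + (2 * t) ^ 2 * r ^ 2 := by
  have key : ∀ t : ℝ, 1 + 2 * (2 * t) * c + (2 * t) ^ 2 * r ^ 2
      - (1 + 2 * t * c + t ^ 2 * r ^ 2) ^ 2 = t ^ 2 * (2 * r ^ 2 - (2 * c + t * r ^ 2) ^ 2) := by
    intro t; ring
  suffices ∃ t : ℝ, t ≠ 0 ∧ (2 * c + t * r ^ 2) ^ 2 < 2 * r ^ 2 by
    obtain ⟨t, ht, hlt⟩ := this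
    refine ⟨t, sub_pos.mp ?_⟩
    rw [key]
    exact mul_pos (pow_two_pos_of_ne_zero ht) (sub_pos.mpr hlt)
  by_cases hc : c = 0
  · refine ⟨r⁻¹, inv_ne_zero hr.ne', ?_⟩
    rw [hc, pow_two r, ← mul_assoc, inv_mul_cancel₀ hr.ne']
    nlinarith
  · refine ⟨-2 * c / r ^ 2, div_ne_zero (by simpa using hc) (by positivity), ?_⟩
    rw [div_mul_cancel₀ _ (by positivity)]
    nlinarith

theorem not_submultiplicative_of_square_zero_element_general
    {𝕜 : Type*} [RCLike 𝕜] {A : Type*} [NormedAddCommGroup A] [InnerProductSpace 𝕜 A]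
    (mul : A →ₗ[𝕜] A →ₗ[𝕜] A)
    (e : A) (hel : ∀ a : A, mul e a = a) (her : ∀ a : A, mul a e = a)
    (he : ‖e‖ = 1)
    (f : A) (hf : f ≠ 0) (hff : mul f f = 0) :
    ∃ a b : A, ‖a‖ * ‖b‖ < ‖mul a b‖ := by
  obtain ⟨t, ht⟩ := exists_sq_quadratic_lt_quadratic_two_mul (RCLike.re (inner 𝕜 e f))
    (norm_pos_iff.mpr hf)
  set a : A := e + (t : 𝕜) • f
  have hsq : mul a a = e + ((2 * t : ℝ) : 𝕜) • f := by
    rw [mul_self_add_smul_of_mul_self_eq_zero mul hel her hff, RCLike.ofReal_mul,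
      RCLike.ofReal_ofNat]
  refine ⟨a, a, (pow_lt_pow_iff_left₀ (by positivity) (norm_nonneg _) two_ne_zero).mp ?_⟩
  rw [hsq, norm_add_ofReal_smul_sq, mul_pow, ← pow_two, norm_add_ofReal_smul_sq, he, one_pow]
  exact ht

/-- **Corollary (nilpotent elements).** Let `𝕜` be `ℝ` or `ℂ` and let `A` be a unital associative
`𝕜`-algebra (given by a bilinear multiplication `mul` with two-sided unit `e`) which is also an
inner product space over `𝕜` with `‖e‖ = 1`.  If there exists `f ≠ 0` with `f·f = 0`, then the
norm is not submultiplicative: there are `a, b` with `‖a·b‖ > ‖a‖·‖b‖`. -/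
theorem not_submultiplicative_of_square_zero_element
    {𝕜 : Type*} [RCLike 𝕜] {A : Type*} [NormedAddCommGroup A] [InnerProductSpace 𝕜 A]
    (mul : A →ₗ[𝕜] A →ₗ[𝕜] A)
    (hassoc : ∀ a b c : A, mul (mul a b) c = mul a (mul b c))
    (e : A) (hel : ∀ a : A, mul e a = a) (her : ∀ a : A, mul a e = a)
    (he : ‖e‖ = 1)
    (f : A) (hf : f ≠ 0) (hff : mul f f = 0) :
    ∃ a b : A, ‖a‖ * ‖b‖ < ‖mul a b‖ :=
  not_submultiplicative_of_square_zero_element_general mul e hel her he f hf hff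
end

section
/- Fix a graded system of Hilbert spaces with product ∘. Let (u_n)_{n≥1}, (v_n)_{n≥1}, (w_n)_{n≥1} be families of positive real weights (with u₀ = v₀ = w₀ = 1) such that w_n ≤ u_n and w_n ≤ v_n for all n ≥ 1, and suppose there is a constant δ > 0 such that (p + q − 1)·w_{p+q} ≤ δ·u_p·v_q for all integers p, q ≥ 1. Then for all elements a, b of the algebra, ‖a ∘ b‖_w ≤ √3·max(1, δ)·‖a‖_u·‖b‖_v. -/
/-! A graded system of Hilbert spaces: a family `(E n)_{n ≥ 1}` of real inner product spaces
together with bilinear maps `mul p q : E p →ₗ E q →ₗ E (p+q)`.  An element of the associated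
algebra is a pair `(a₀, (a n)_{n ≥ 1})` with `a₀ : ℝ`, `a n : E n`, all but finitely many `a n`
zero (the component `a 0` is unused dead data).  -/

/-- The degree-`n` component (`n ≥ 1`) of the product of the elements `(a₀, a)` and `(b₀, b)`:
`c n = a₀ • b n + b₀ • a n + ∑_{p+q=n, p,q ≥ 1} a p ∘ b q`. -/
noncomputable def gradedMul {E : ℕ → Type*} [∀ n, NormedAddCommGroup (E n)]
    [∀ n, InnerProductSpace ℝ (E n)]
    (mul : ∀ p q : ℕ, E p →ₗ[ℝ] E q →ₗ[ℝ] E (p + q))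
    (a₀ : ℝ) (a : ∀ n, E n) (b₀ : ℝ) (b : ∀ n, E n) (n : ℕ) : E n :=
  a₀ • b n + b₀ • a n +
    ∑ p ∈ Finset.Ioo 0 n,
      if h : p + (n - p) = n then cast (congrArg E h) (mul p (n - p) (a p) (b (n - p))) else 0

/-- The weighted Hilbert norm `‖a‖_w = √(a₀² + ∑_{n ≥ 1} w n · ‖a n‖²)` (the weight `w 0 = 1`
of the scalar component is built in). -/
noncomputable def wnorm {E : ℕ → Type*} [∀ n, NormedAddCommGroup (E n)]
    (w : ℕ → ℝ) (a₀ : ℝ) (a : ∀ n, E n) : ℝ :=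
  Real.sqrt (a₀ ^ 2 + ∑' n : ℕ, w (n + 1) * ‖a (n + 1)‖ ^ 2)

lemma norm_cast_congr {E : ℕ → Type*} [∀ n, NormedAddCommGroup (E n)]
    {m n : ℕ} (h : m = n) (x : E m) : ‖cast (congrArg E h) x‖ = ‖x‖ := by
  subst h; rfl

lemma cast_congr_zero {E : ℕ → Type*} [∀ n, NormedAddCommGroup (E n)]
    {m n : ℕ} (h : m = n) : cast (congrArg E h) (0 : E m) = 0 := by
  subst h; rfl

lemma final_alg {K δ x y A B S : ℝ} (hδ : 0 < δ) (hK1 : 1 ≤ K) (hKδ : δ ≤ K)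
    (hA : 0 ≤ A) (hB : 0 ≤ B)
    (h : S ≤ 3 * (x ^ 2 * B + y ^ 2 * A + δ * (A * B))) :
    (x * y) ^ 2 + S ≤ 3 * K ^ 2 * ((x ^ 2 + A) * (y ^ 2 + B)) := by
  have hK2 : 1 ≤ K ^ 2 := by nlinarith
  have hKδ2 : δ ≤ K ^ 2 := by nlinarith
  nlinarith [mul_nonneg (sq_nonneg x) (sq_nonneg y), mul_nonneg (sq_nonneg x) hB,
    mul_nonneg (sq_nonneg y) hA, mul_nonneg hA hB, sq_nonneg x, sq_nonneg y]

set_option maxHeartbeats 2000000 in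
/-- **Theorem 2 (general norm estimate).** If the graded product satisfies
`‖x ∘ y‖ ≤ ‖x‖·‖y‖` on homogeneous components, the weights satisfy `w n ≤ u n`, `w n ≤ v n`
and `(p+q-1)·w (p+q) ≤ δ·u p·v q` for `p, q ≥ 1`, then
`‖a ∘ b‖_w ≤ √3·max 1 δ·‖a‖_u·‖b‖_v` for all elements `a`, `b` of the algebra. -/
theorem graded_norm_estimate
    {E : ℕ → Type*} [∀ n, NormedAddCommGroup (E n)] [∀ n, InnerProductSpace ℝ (E n)]
    (mul : ∀ p q : ℕ, E p →ₗ[ℝ] E q →ₗ[ℝ] E (p + q))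
    (hmul : ∀ p q : ℕ, 1 ≤ p → 1 ≤ q → ∀ (x : E p) (y : E q), ‖mul p q x y‖ ≤ ‖x‖ * ‖y‖)
    (u v w : ℕ → ℝ)
    (hu : ∀ n, 1 ≤ n → 0 < u n) (hv : ∀ n, 1 ≤ n → 0 < v n) (hw : ∀ n, 1 ≤ n → 0 < w n)
    (hwu : ∀ n, 1 ≤ n → w n ≤ u n) (hwv : ∀ n, 1 ≤ n → w n ≤ v n)
    (δ : ℝ) (hδ : 0 < δ)
    (hweights : ∀ p q : ℕ, 1 ≤ p → 1 ≤ q →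
      ((p : ℝ) + q - 1) * w (p + q) ≤ δ * u p * v q)
    (a₀ : ℝ) (a : ∀ n, E n) (ha : ∃ N, ∀ n, N ≤ n → a n = 0)
    (b₀ : ℝ) (b : ∀ n, E n) (hb : ∃ N, ∀ n, N ≤ n → b n = 0) :
    wnorm w (a₀ * b₀) (gradedMul mul a₀ a b₀ b) ≤
      Real.sqrt 3 * max 1 δ * wnorm u a₀ a * wnorm v b₀ b := by
  obtain ⟨Na, hNa⟩ := ha
  obtain ⟨Nb, hNb⟩ := hb
  set M := Na + Nb with hMdef
  set c := gradedMul mul a₀ a b₀ b with hc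
  set K := max 1 δ with hK
  have hK1 : (1:ℝ) ≤ K := le_max_left _ _
  have hKδ : δ ≤ K := le_max_right _ _
  set f : ℕ → ℝ := fun n => u n * ‖a n‖ ^ 2 with hf
  set g : ℕ → ℝ := fun n => v n * ‖b n‖ ^ 2 with hg
  have hf0 : ∀ p, 1 ≤ p → 0 ≤ f p := fun p hp => by
    simp only [hf]; exact mul_nonneg (hu p hp).le (by positivity)
  have hg0 : ∀ p, 1 ≤ p → 0 ≤ g p := fun p hp => by
    simp only [hg]; exact mul_nonneg (hv p hp).le (by positivity)
  -- c vanishes at large degree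
  have hczero : ∀ m, M ≤ m → c m = 0 := by
    intro m hm
    have hA : a m = 0 := hNa m (by omega)
    have hB : b m = 0 := hNb m (by omega)
    have hsum : ∀ p ∈ Finset.Ioo 0 m,
        (if h : p + (m - p) = m then
          cast (congrArg E h) (mul p (m - p) (a p) (b (m - p))) else 0) = 0 := by
      intro p hp
      simp only [Finset.mem_Ioo] at hp
      have h : p + (m - p) = m := by omega
      rw [dif_pos h]
      rcases le_or_gt Na p with h1 | h1
      · rw [hNa p h1]
        simp only [map_zero, LinearMap.zero_apply]
        exact cast_congr_zero h
      · rw [hNb (m - p) (by omega)]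
        simp only [map_zero]
        exact cast_congr_zero h
    rw [hc]
    simp only [gradedMul, hA, hB, smul_zero, zero_add, add_zero]
    rw [Finset.sum_eq_zero hsum]
  -- the three tsums are finite sums
  have hAsum : (∑' n : ℕ, u (n + 1) * ‖a (n + 1)‖ ^ 2) = ∑ n ∈ Finset.range M, f (n + 1) := by
    refine tsum_eq_sum ?_
    intro n hn
    simp only [Finset.mem_range, not_lt] at hn
    rw [hNa (n + 1) (by omega)]
    simp
  have hBsum : (∑' n : ℕ, v (n + 1) * ‖b (n + 1)‖ ^ 2) = ∑ n ∈ Finset.range M, g (n + 1) := by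
    refine tsum_eq_sum ?_
    intro n hn
    simp only [Finset.mem_range, not_lt] at hn
    rw [hNb (n + 1) (by omega)]
    simp
  have hCsum : (∑' n : ℕ, w (n + 1) * ‖c (n + 1)‖ ^ 2)
      = ∑ n ∈ Finset.range M, w (n + 1) * ‖c (n + 1)‖ ^ 2 := by
    refine tsum_eq_sum ?_
    intro n hn
    simp only [Finset.mem_range, not_lt] at hn
    rw [hczero (n + 1) (by omega)]
    simp
  -- pointwise estimate on each component
  have key : ∀ n, 1 ≤ n → w n * ‖c n‖ ^ 2 ≤
      3 * (a₀ ^ 2 * g n + b₀ ^ 2 * f n + δ * ∑ p ∈ Finset.Ioo 0 n, f p * g (n - p)) := by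
    intro n hn
    set S := ∑ p ∈ Finset.Ioo 0 n, ‖a p‖ * ‖b (n - p)‖ with hS
    have hS0 : 0 ≤ S := Finset.sum_nonneg fun p _ => by positivity
    have hnorm : ‖c n‖ ≤ |a₀| * ‖b n‖ + |b₀| * ‖a n‖ + S := by
      rw [hc]
      simp only [gradedMul]
      refine le_trans (norm_add_le _ _) ?_
      gcongr ?_ + ?_
      · calc ‖a₀ • b n + b₀ • a n‖ ≤ ‖a₀ • b n‖ + ‖b₀ • a n‖ := norm_add_le _ _
          _ = |a₀| * ‖b n‖ + |b₀| * ‖a n‖ := by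
              rw [norm_smul, norm_smul, Real.norm_eq_abs, Real.norm_eq_abs]
      · refine le_trans (norm_sum_le _ _) ?_
        rw [hS]
        refine Finset.sum_le_sum ?_
        intro p hp
        simp only [Finset.mem_Ioo] at hp
        have h : p + (n - p) = n := by omega
        rw [dif_pos h, norm_cast_congr h]
        exact hmul p (n - p) hp.1 (by omega) _ _
    have hCS : S ^ 2 ≤ ((n - 1 : ℕ) : ℝ) * ∑ p ∈ Finset.Ioo 0 n, (‖a p‖ * ‖b (n - p)‖) ^ 2 := by
      have h := sq_sum_le_card_mul_sum_sq (s := Finset.Ioo 0 n)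
        (f := fun p => ‖a p‖ * ‖b (n - p)‖)
      simpa [Nat.card_Ioo, hS] using h
    have hconv : w n * S ^ 2 ≤ δ * ∑ p ∈ Finset.Ioo 0 n, f p * g (n - p) := by
      calc w n * S ^ 2
          ≤ w n * (((n - 1 : ℕ) : ℝ) * ∑ p ∈ Finset.Ioo 0 n, (‖a p‖ * ‖b (n - p)‖) ^ 2) :=
            mul_le_mul_of_nonneg_left hCS (hw n hn).le
        _ = ∑ p ∈ Finset.Ioo 0 n, ((n - 1 : ℕ) : ℝ) * w n * (‖a p‖ * ‖b (n - p)‖) ^ 2 := by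
            rw [Finset.mul_sum, Finset.mul_sum]
            exact Finset.sum_congr rfl fun p _ => by ring
        _ ≤ ∑ p ∈ Finset.Ioo 0 n, δ * (f p * g (n - p)) := by
            refine Finset.sum_le_sum ?_
            intro p hp
            simp only [Finset.mem_Ioo] at hp
            have hq : 1 ≤ n - p := by omega
            have hws := hweights p (n - p) hp.1 hq
            rw [show p + (n - p) = n from by omega] at hws
            have h1 : ((n - p : ℕ) : ℝ) = (n : ℝ) - p := Nat.cast_sub (by omega)
            have h2 : ((n - 1 : ℕ) : ℝ) = (n : ℝ) - 1 := by rw [Nat.cast_sub hn]; norm_num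
            have hws' : ((n - 1 : ℕ) : ℝ) * w n ≤ δ * u p * v (n - p) := by
              rw [h2]; rw [h1] at hws; linarith [hws]
            have hnn : (0:ℝ) ≤ (‖a p‖ * ‖b (n - p)‖) ^ 2 := by positivity
            calc ((n - 1 : ℕ) : ℝ) * w n * (‖a p‖ * ‖b (n - p)‖) ^ 2
                ≤ δ * u p * v (n - p) * (‖a p‖ * ‖b (n - p)‖) ^ 2 :=
                  mul_le_mul_of_nonneg_right hws' hnn
              _ = δ * (f p * g (n - p)) := by simp only [hf, hg]; ring
        _ = δ * ∑ p ∈ Finset.Ioo 0 n, f p * g (n - p) := (Finset.mul_sum _ _ _).symm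
    have h3 : ‖c n‖ ^ 2 ≤ 3 * ((|a₀| * ‖b n‖) ^ 2 + (|b₀| * ‖a n‖) ^ 2 + S ^ 2) := by
      have hsq : ‖c n‖ ^ 2 ≤ (|a₀| * ‖b n‖ + |b₀| * ‖a n‖ + S) ^ 2 :=
        pow_le_pow_left₀ (norm_nonneg _) hnorm 2
      nlinarith [sq_nonneg (|a₀| * ‖b n‖ - |b₀| * ‖a n‖), sq_nonneg (|a₀| * ‖b n‖ - S),
        sq_nonneg (|b₀| * ‖a n‖ - S)]
    have hx : w n * (|a₀| * ‖b n‖) ^ 2 ≤ a₀ ^ 2 * g n := by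
      simp only [hg, mul_pow, sq_abs]
      nlinarith [mul_nonneg (mul_nonneg (sub_nonneg.2 (hwv n hn)) (sq_nonneg a₀))
        (sq_nonneg ‖b n‖)]
    have hy : w n * (|b₀| * ‖a n‖) ^ 2 ≤ b₀ ^ 2 * f n := by
      simp only [hf, mul_pow, sq_abs]
      nlinarith [mul_nonneg (mul_nonneg (sub_nonneg.2 (hwu n hn)) (sq_nonneg b₀))
        (sq_nonneg ‖a n‖)]
    calc w n * ‖c n‖ ^ 2
        ≤ w n * (3 * ((|a₀| * ‖b n‖) ^ 2 + (|b₀| * ‖a n‖) ^ 2 + S ^ 2)) :=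
          mul_le_mul_of_nonneg_left h3 (hw n hn).le
      _ = 3 * (w n * (|a₀| * ‖b n‖) ^ 2 + w n * (|b₀| * ‖a n‖) ^ 2 + w n * S ^ 2) := by ring
      _ ≤ 3 * (a₀ ^ 2 * g n + b₀ ^ 2 * f n + δ * ∑ p ∈ Finset.Ioo 0 n, f p * g (n - p)) := by
          linarith [hx, hy, hconv]
  -- the double-sum estimate
  have hDsum : (∑ n ∈ Finset.range M, ∑ p ∈ Finset.Ioo 0 (n + 1), f p * g (n + 1 - p))
      ≤ (∑ n ∈ Finset.range M, f (n + 1)) * (∑ n ∈ Finset.range M, g (n + 1)) := by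
    classical
    set T := (Finset.range M).sigma (fun n => Finset.Ioo 0 (n + 1)) with hT
    set e : (Σ _ : ℕ, ℕ) → ℕ × ℕ := fun x => (x.2 - 1, x.1 - x.2) with he
    have step1 : (∑ n ∈ Finset.range M, ∑ p ∈ Finset.Ioo 0 (n + 1), f p * g (n + 1 - p))
        = ∑ x ∈ T, f ((e x).1 + 1) * g ((e x).2 + 1) := by
      rw [hT, Finset.sum_sigma]
      refine Finset.sum_congr rfl ?_
      intro n hn
      refine Finset.sum_congr rfl ?_
      intro p hp
      simp only [Finset.mem_Ioo] at hp
      simp only [he]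
      rw [show p - 1 + 1 = p from by omega, show n - p + 1 = n + 1 - p from by omega]
    have hinj : ∀ x ∈ T, ∀ y ∈ T, e x = e y → x = y := by
      rintro ⟨n, p⟩ hx ⟨n', p'⟩ hy hxy
      simp only [hT, Finset.mem_sigma, Finset.mem_range, Finset.mem_Ioo] at hx hy
      simp only [he, Prod.mk.injEq] at hxy
      obtain ⟨h1, h2⟩ := hxy
      have hp : p = p' := by omega
      subst hp
      have hn : n = n' := by omega
      subst hn
      rfl
    have step2 : (∑ x ∈ T, f ((e x).1 + 1) * g ((e x).2 + 1))
        = ∑ y ∈ T.image e, f (y.1 + 1) * g (y.2 + 1) :=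
      (Finset.sum_image (f := fun y : ℕ × ℕ => f (y.1 + 1) * g (y.2 + 1)) hinj).symm
    have hsub : T.image e ⊆ Finset.range M ×ˢ Finset.range M := by
      intro y hy
      simp only [Finset.mem_image] at hy
      obtain ⟨⟨n, p⟩, hx, rfl⟩ := hy
      simp only [hT, Finset.mem_sigma, Finset.mem_range, Finset.mem_Ioo] at hx
      simp only [he, Finset.mem_product, Finset.mem_range]
      omega
    have step3 : (∑ y ∈ T.image e, f (y.1 + 1) * g (y.2 + 1))
        ≤ ∑ y ∈ Finset.range M ×ˢ Finset.range M, f (y.1 + 1) * g (y.2 + 1) := by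
      refine Finset.sum_le_sum_of_subset_of_nonneg hsub ?_
      intro y _ _
      exact mul_nonneg (hf0 _ (by omega)) (hg0 _ (by omega))
    have step4 : (∑ y ∈ Finset.range M ×ˢ Finset.range M, f (y.1 + 1) * g (y.2 + 1))
        = (∑ n ∈ Finset.range M, f (n + 1)) * (∑ n ∈ Finset.range M, g (n + 1)) := by
      rw [Finset.sum_mul_sum, ← Finset.sum_product']
    rw [step1, step2, ← step4]
    exact step3
  -- summed estimate
  have hA'0 : 0 ≤ ∑ n ∈ Finset.range M, f (n + 1) :=
    Finset.sum_nonneg fun n _ => hf0 _ (by omega)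
  have hB'0 : 0 ≤ ∑ n ∈ Finset.range M, g (n + 1) :=
    Finset.sum_nonneg fun n _ => hg0 _ (by omega)
  have hsum : (∑ n ∈ Finset.range M, w (n + 1) * ‖c (n + 1)‖ ^ 2)
      ≤ 3 * (a₀ ^ 2 * (∑ n ∈ Finset.range M, g (n + 1))
          + b₀ ^ 2 * (∑ n ∈ Finset.range M, f (n + 1))
          + δ * ((∑ n ∈ Finset.range M, f (n + 1)) * (∑ n ∈ Finset.range M, g (n + 1)))) := by
    calc (∑ n ∈ Finset.range M, w (n + 1) * ‖c (n + 1)‖ ^ 2)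
        ≤ ∑ n ∈ Finset.range M, 3 * (a₀ ^ 2 * g (n + 1) + b₀ ^ 2 * f (n + 1)
            + δ * ∑ p ∈ Finset.Ioo 0 (n + 1), f p * g (n + 1 - p)) :=
          Finset.sum_le_sum fun n _ => key (n + 1) (by omega)
      _ = 3 * (a₀ ^ 2 * (∑ n ∈ Finset.range M, g (n + 1))
            + b₀ ^ 2 * (∑ n ∈ Finset.range M, f (n + 1))
            + δ * (∑ n ∈ Finset.range M, ∑ p ∈ Finset.Ioo 0 (n + 1), f p * g (n + 1 - p))) := by
          rw [Finset.mul_sum, Finset.mul_sum, Finset.mul_sum, ← Finset.sum_add_distrib,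
            ← Finset.sum_add_distrib, Finset.mul_sum]
      _ ≤ _ := by
          have := mul_le_mul_of_nonneg_left hDsum hδ.le
          linarith
  -- final algebraic estimate
  have hfinal : (a₀ * b₀) ^ 2 + ∑ n ∈ Finset.range M, w (n + 1) * ‖c (n + 1)‖ ^ 2
      ≤ 3 * K ^ 2 * ((a₀ ^ 2 + ∑ n ∈ Finset.range M, f (n + 1))
          * (b₀ ^ 2 + ∑ n ∈ Finset.range M, g (n + 1))) :=
    final_alg hδ hK1 hKδ hA'0 hB'0 hsum
  clear_value M c K f g
  simp only [wnorm]
  rw [hCsum, hAsum, hBsum]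
  refine le_trans (Real.sqrt_le_sqrt hfinal) (le_of_eq ?_)
  have hKnn : (0:ℝ) ≤ K := by linarith
  have hX : (0:ℝ) ≤ a₀ ^ 2 + ∑ n ∈ Finset.range M, f (n + 1) :=
    add_nonneg (sq_nonneg a₀) hA'0
  rw [Real.sqrt_mul (by nlinarith [sq_nonneg K] : (0:ℝ) ≤ 3 * K ^ 2), Real.sqrt_mul (by norm_num : (0:ℝ) ≤ 3),
    Real.sqrt_sq hKnn, Real.sqrt_mul hX]
  ring
end

section
/- Fix a graded system of Hilbert spaces with product ∘, and take the weights w₀ = 1 and w_n = 1/(n−1)! for n ≥ 1. Then for all elements a, b of the algebra, ‖a ∘ b‖_w ≤ √3·‖a‖_w·‖b‖_w. -/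
/-!
Degreewise, `‖(a ∘ b)ₙ‖ ≤ |a₀|‖bₙ‖ + |b₀|‖aₙ‖ + ∑_{p+q=n} ‖a_p‖‖b_q‖`, and `(x+y+z)² ≤ 3(x²+y²+z²)`.
The weights `wₙ = 1/(n-1)!` satisfy `wₙ ∑_{p+q=n} 1/(w_p w_q) ≤ 1`, because
`(p-1)!(q-1)! ≤ (n-2)!` and there are `n-1` such pairs. By weighted Cauchy–Schwarz this gives
`wₙ (∑_{p+q=n} ‖a_p‖‖b_q‖)² ≤ ∑_{p+q=n} w_p‖a_p‖² w_q‖b_q‖²`, and summing over `n` bounds the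
convolution part by `‖a‖²‖b‖²`. Altogether `‖a ∘ b‖² ≤ 3‖a‖²‖b‖²`.
-/

open Finset

lemma Nat.sum_Ioo_factorial_mul_factorial_le (n : ℕ) :
    ∑ p ∈ Ioo 0 n, (p - 1).factorial * (n - p - 1).factorial ≤ (n - 1).factorial := by
  calc ∑ p ∈ Ioo 0 n, (p - 1).factorial * (n - p - 1).factorial
      ≤ ∑ _p ∈ Ioo 0 n, (n - 2).factorial := by
        refine sum_le_sum fun p hp => Nat.le_of_dvd (Nat.factorial_pos _) ?_
        have hsum : p - 1 + (n - p - 1) = n - 2 := by grind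
        exact hsum ▸ Nat.factorial_mul_factorial_dvd_factorial_add _ _
    _ = (n - 1) * (n - 2).factorial := by rw [sum_const, Nat.card_Ioo, Nat.sub_zero, smul_eq_mul]
    _ ≤ (n - 1).factorial := by
        rcases Nat.lt_or_ge n 2 with hn | hn
        · interval_cases n <;> simp
        · rw [show n - 2 = n - 1 - 1 by omega, Nat.mul_factorial_pred (by omega)]

lemma sum_Ioo_sum_Ioo_mul_sub_le {R : Type*} [CommSemiring R] [PartialOrder R] [IsOrderedRing R]
    {F G : ℕ → R} (hF : ∀ i, 0 ≤ F i) (hG : ∀ i, 0 ≤ G i) (K : ℕ) :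
    ∑ n ∈ Ioo 0 K, ∑ p ∈ Ioo 0 n, F p * G (n - p) ≤
      (∑ p ∈ Ioo 0 K, F p) * ∑ q ∈ Ioo 0 K, G q := by
  rw [sum_comm' (t' := Ioo 0 K) (s' := fun p => Ioo p K)
    (fun n p => by simp only [mem_Ioo]; omega), sum_mul]
  refine sum_le_sum fun p _ => ?_
  rw [← mul_sum]
  refine mul_le_mul_of_nonneg_left ?_ (hF p)
  calc ∑ n ∈ Ioo p K, G (n - p) = ∑ q ∈ (Ioo p K).image (· - p), G q :=
        (sum_image fun x hx y hy h => by simp only [coe_Ioo, Set.mem_Ioo] at hx hy h; omega).symm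
    _ ≤ ∑ q ∈ Ioo 0 K, G q :=
        sum_le_sum_of_subset_of_nonneg (fun q => by simp only [mem_image, mem_Ioo]; omega)
          fun _ _ _ => hG _

lemma tsum_succ_eq_sum_Ioo {M : Type*} [AddCommMonoid M] [TopologicalSpace M] {f : ℕ → M}
    {K : ℕ} (hf : ∀ n, K ≤ n → f n = 0) :
    ∑' n, f (n + 1) = ∑ n ∈ Ioo 0 (K + 1), f n := by
  rw [tsum_eq_sum (s := range K) fun n hn => hf _ (by simp only [mem_range] at hn; omega),
    range_eq_Ico, sum_Ico_add', Ico_add_one_left_eq_Ioo]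

def IsConvolutionWeight (w : ℕ → ℝ) : Prop :=
  ∀ n, w n * ∑ p ∈ Ioo 0 n, (w p * w (n - p))⁻¹ ≤ 1

lemma isConvolutionWeight_inv_factorial_pred :
    IsConvolutionWeight fun n => 1 / ((n - 1).factorial : ℝ) := by
  intro n
  simp only [one_div, ← mul_inv, inv_inv]
  rw [inv_mul_le_one₀ (by positivity)]
  exact_mod_cast Nat.sum_Ioo_factorial_mul_factorial_le n

lemma IsConvolutionWeight.mul_sq_sum_le {w : ℕ → ℝ} (hconv : IsConvolutionWeight w)
    (hw : ∀ n, 0 < w n) (n : ℕ) (α β : ℕ → ℝ) :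
    w n * (∑ p ∈ Ioo 0 n, α p * β (n - p)) ^ 2 ≤
      ∑ p ∈ Ioo 0 n, (w p * α p ^ 2) * (w (n - p) * β (n - p) ^ 2) := by
  set S := ∑ p ∈ Ioo 0 n, (w p * α p ^ 2) * (w (n - p) * β (n - p) ^ 2)
  have hpos : ∀ p, 0 < w p * w (n - p) := fun p => mul_pos (hw p) (hw (n - p))
  have hS : 0 ≤ S := sum_nonneg fun p _ => by have := hw p; have := hw (n - p); positivity
  have hCS : (∑ p ∈ Ioo 0 n, α p * β (n - p)) ^ 2 ≤
      (∑ p ∈ Ioo 0 n, (w p * w (n - p))⁻¹) * S :=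
    sum_sq_le_sum_mul_sum_of_sq_le_mul _ (fun p _ => (inv_pos.2 (hpos p)).le)
      (fun p _ => by have := hw p; have := hw (n - p); positivity)
      (fun p _ => le_of_eq <| by
        have := (hw p).ne'; have := (hw (n - p)).ne'; field_simp)
  calc w n * (∑ p ∈ Ioo 0 n, α p * β (n - p)) ^ 2
      ≤ w n * ((∑ p ∈ Ioo 0 n, (w p * w (n - p))⁻¹) * S) :=
        mul_le_mul_of_nonneg_left hCS (hw n).le
    _ = (w n * ∑ p ∈ Ioo 0 n, (w p * w (n - p))⁻¹) * S := (mul_assoc _ _ _).symm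
    _ ≤ S := mul_le_of_le_one_left hS (hconv n)

lemma norm_cast_congrArg {E : ℕ → Type*} [∀ n, Norm (E n)] {m n : ℕ} (h : m = n) (x : E m) :
    ‖cast (congrArg E h) x‖ = ‖x‖ := by
  subst h; rfl

lemma wnorm_eq_sqrt_sum_Ioo {E : ℕ → Type*} [∀ n, NormedAddCommGroup (E n)] (w : ℕ → ℝ)
    (x₀ : ℝ) {x : ∀ n, E n} {K : ℕ} (hx : ∀ n, K ≤ n → x n = 0) :
    wnorm w x₀ x = √(x₀ ^ 2 + ∑ n ∈ Ioo 0 (K + 1), w n * ‖x n‖ ^ 2) := by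
  rw [wnorm, tsum_succ_eq_sum_Ioo (f := fun n => w n * ‖x n‖ ^ 2)
    fun n hn => by simp [hx n hn]]

section GradedMul

variable {E : ℕ → Type*} [∀ n, NormedAddCommGroup (E n)] [∀ n, InnerProductSpace ℝ (E n)]
  {mul : ∀ p q : ℕ, E p →ₗ[ℝ] E q →ₗ[ℝ] E (p + q)}
  (hmul : ∀ p q : ℕ, 1 ≤ p → 1 ≤ q → ∀ (x : E p) (y : E q), ‖mul p q x y‖ ≤ ‖x‖ * ‖y‖)
  (a₀ : ℝ) (a : ∀ n, E n) (b₀ : ℝ) (b : ∀ n, E n)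
include hmul

lemma norm_gradedMul_le (n : ℕ) :
    ‖gradedMul mul a₀ a b₀ b n‖ ≤
      |a₀| * ‖b n‖ + |b₀| * ‖a n‖ + ∑ p ∈ Ioo 0 n, ‖a p‖ * ‖b (n - p)‖ := by
  refine (norm_add_le _ _).trans (add_le_add ((norm_add_le _ _).trans_eq ?_) ?_)
  · rw [norm_smul, norm_smul, Real.norm_eq_abs, Real.norm_eq_abs]
  · refine (norm_sum_le _ _).trans (sum_le_sum fun p hp => ?_)
    have hp' := mem_Ioo.1 hp
    have hpq : p + (n - p) = n := by omega
    rw [dif_pos hpq, norm_cast_congrArg hpq]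
    exact hmul p (n - p) hp'.1 (by omega) _ _

lemma gradedMul_eq_zero_of_le {Na Nb : ℕ} (ha : ∀ n, Na ≤ n → a n = 0)
    (hb : ∀ n, Nb ≤ n → b n = 0) {n : ℕ} (hn : Na + Nb ≤ n) :
    gradedMul mul a₀ a b₀ b n = 0 := by
  have hsum : ∑ p ∈ Ioo 0 n, ‖a p‖ * ‖b (n - p)‖ = 0 := sum_eq_zero fun p _ => by
    rcases lt_or_ge p Na with hp | hp
    · rw [hb (n - p) (by omega), norm_zero, mul_zero]
    · rw [ha p hp, norm_zero, zero_mul]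
  have hle := norm_gradedMul_le hmul a₀ a b₀ b n
  rw [ha n (by omega), hb n (by omega), hsum] at hle
  exact norm_le_zero_iff.1 (by simpa using hle)

variable {w : ℕ → ℝ} (hw : ∀ n, 0 < w n) (hconv : IsConvolutionWeight w)
include hw hconv

lemma weight_mul_norm_gradedMul_sq_le (n : ℕ) :
    w n * ‖gradedMul mul a₀ a b₀ b n‖ ^ 2 ≤
      3 * (a₀ ^ 2 * (w n * ‖b n‖ ^ 2) + b₀ ^ 2 * (w n * ‖a n‖ ^ 2) +
        ∑ p ∈ Ioo 0 n, (w p * ‖a p‖ ^ 2) * (w (n - p) * ‖b (n - p)‖ ^ 2)) := by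
  set x := |a₀| * ‖b n‖
  set y := |b₀| * ‖a n‖
  set z := ∑ p ∈ Ioo 0 n, ‖a p‖ * ‖b (n - p)‖
  have hsq : ‖gradedMul mul a₀ a b₀ b n‖ ^ 2 ≤ 3 * (x ^ 2 + y ^ 2 + z ^ 2) := by
    have := pow_le_pow_left₀ (norm_nonneg _) (norm_gradedMul_le hmul a₀ a b₀ b n) 2
    nlinarith [sq_nonneg (x - y), sq_nonneg (x - z), sq_nonneg (y - z)]
  calc w n * ‖gradedMul mul a₀ a b₀ b n‖ ^ 2 ≤ w n * (3 * (x ^ 2 + y ^ 2 + z ^ 2)) :=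
        mul_le_mul_of_nonneg_left hsq (hw n).le
    _ = 3 * (a₀ ^ 2 * (w n * ‖b n‖ ^ 2) + b₀ ^ 2 * (w n * ‖a n‖ ^ 2) + w n * z ^ 2) := by
        simp only [x, y, mul_pow, sq_abs]; ring
    _ ≤ _ := by
        gcongr
        exact hconv.mul_sq_sum_le hw n (fun p => ‖a p‖) (fun p => ‖b p‖)

lemma sum_weight_mul_norm_gradedMul_sq_le (K : ℕ) :
    ∑ n ∈ Ioo 0 K, w n * ‖gradedMul mul a₀ a b₀ b n‖ ^ 2 ≤
      3 * (a₀ ^ 2 * ∑ n ∈ Ioo 0 K, w n * ‖b n‖ ^ 2 + b₀ ^ 2 * ∑ n ∈ Ioo 0 K, w n * ‖a n‖ ^ 2 +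
        (∑ n ∈ Ioo 0 K, w n * ‖a n‖ ^ 2) * ∑ n ∈ Ioo 0 K, w n * ‖b n‖ ^ 2) := by
  calc ∑ n ∈ Ioo 0 K, w n * ‖gradedMul mul a₀ a b₀ b n‖ ^ 2
      ≤ ∑ n ∈ Ioo 0 K, 3 * (a₀ ^ 2 * (w n * ‖b n‖ ^ 2) + b₀ ^ 2 * (w n * ‖a n‖ ^ 2) +
          ∑ p ∈ Ioo 0 n, (w p * ‖a p‖ ^ 2) * (w (n - p) * ‖b (n - p)‖ ^ 2)) :=
        sum_le_sum fun n _ => weight_mul_norm_gradedMul_sq_le hmul a₀ a b₀ b hw hconv n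
    _ = 3 * (a₀ ^ 2 * ∑ n ∈ Ioo 0 K, w n * ‖b n‖ ^ 2 + b₀ ^ 2 * ∑ n ∈ Ioo 0 K, w n * ‖a n‖ ^ 2 +
          ∑ n ∈ Ioo 0 K, ∑ p ∈ Ioo 0 n, (w p * ‖a p‖ ^ 2) * (w (n - p) * ‖b (n - p)‖ ^ 2)) := by
        simp only [← mul_sum, sum_add_distrib]
    _ ≤ _ := by
        gcongr
        exact sum_Ioo_sum_Ioo_mul_sub_le (F := fun p => w p * ‖a p‖ ^ 2)
          (G := fun q => w q * ‖b q‖ ^ 2) (fun p => by have := hw p; positivity)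
          (fun q => by have := hw q; positivity) K

theorem wnorm_gradedMul_le (ha : ∃ N, ∀ n, N ≤ n → a n = 0) (hb : ∃ N, ∀ n, N ≤ n → b n = 0) :
    wnorm w (a₀ * b₀) (gradedMul mul a₀ a b₀ b) ≤ √3 * wnorm w a₀ a * wnorm w b₀ b := by
  obtain ⟨Na, ha⟩ := ha
  obtain ⟨Nb, hb⟩ := hb
  set K := Na + Nb
  have hA : 0 ≤ ∑ n ∈ Ioo 0 (K + 1), w n * ‖a n‖ ^ 2 :=
    sum_nonneg fun n _ => by have := hw n; positivity
  have hB : 0 ≤ ∑ n ∈ Ioo 0 (K + 1), w n * ‖b n‖ ^ 2 :=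
    sum_nonneg fun n _ => by have := hw n; positivity
  have hc := sum_weight_mul_norm_gradedMul_sq_le hmul a₀ a b₀ b hw hconv (K + 1)
  rw [wnorm_eq_sqrt_sum_Ioo w _ fun n => gradedMul_eq_zero_of_le hmul a₀ a b₀ b ha hb,
    wnorm_eq_sqrt_sum_Ioo (K := K) w a₀ fun n hn => ha n (by omega),
    wnorm_eq_sqrt_sum_Ioo (K := K) w b₀ fun n hn => hb n (by omega),
    ← Real.sqrt_mul (by norm_num), ← Real.sqrt_mul (by positivity)]
  refine Real.sqrt_le_sqrt ?_
  nlinarith [sq_nonneg (a₀ * b₀)]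

end GradedMul

/-- **Corollary 2, first weight family.** With the weights `w 0 = 1`, `w n = 1/(n-1)!` for
`n ≥ 1`, the product of the algebra satisfies `‖a ∘ b‖ ≤ √3·‖a‖·‖b‖`. -/
theorem graded_norm_estimate_inv_factorial_pred
    {E : ℕ → Type*} [∀ n, NormedAddCommGroup (E n)] [∀ n, InnerProductSpace ℝ (E n)]
    (mul : ∀ p q : ℕ, E p →ₗ[ℝ] E q →ₗ[ℝ] E (p + q))
    (hmul : ∀ p q : ℕ, 1 ≤ p → 1 ≤ q → ∀ (x : E p) (y : E q), ‖mul p q x y‖ ≤ ‖x‖ * ‖y‖)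
    (a₀ : ℝ) (a : ∀ n, E n) (ha : ∃ N, ∀ n, N ≤ n → a n = 0)
    (b₀ : ℝ) (b : ∀ n, E n) (hb : ∃ N, ∀ n, N ≤ n → b n = 0) :
    wnorm (fun n => 1 / ((n - 1).factorial : ℝ)) (a₀ * b₀) (gradedMul mul a₀ a b₀ b) ≤
      Real.sqrt 3 * wnorm (fun n => 1 / ((n - 1).factorial : ℝ)) a₀ a *
        wnorm (fun n => 1 / ((n - 1).factorial : ℝ)) b₀ b :=
  wnorm_gradedMul_le hmul a₀ a b₀ b (fun n => by positivity)
    isConvolutionWeight_inv_factorial_pred ha hb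
end

section
/- Let (w_n)_{n≥1} be a family of strictly positive real numbers and δ > 0 a constant such that (p + q − 1)·w_{p+q} ≤ δ·w_p·w_q for all integers p, q ≥ 1. Then for every p ≥ 1, w_p ≤ (δ·w₁)^{p−1}·w₁/(p − 1)!. In particular, the weights of any single Hilbert norm for which the graded product admits such a uniform estimate must decay at least as fast as a constant times c^p/(p−1)! for some c > 0. -/
/-- If strictly positive weights `(w n)_{n ≥ 1}` satisfy the multiplicative weight inequality
`(p+q-1)·w (p+q) ≤ δ·w p·w q` for all `p, q ≥ 1` with a constant `δ > 0`, then
`w p ≤ (δ·w 1)^(p-1)·w 1/(p-1)!` for every `p ≥ 1`: the weights must decay at least like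
`c^p/(p-1)!`. -/
theorem weight_decay_of_multiplicative_inequality
    (w : ℕ → ℝ) (hw : ∀ n : ℕ, 1 ≤ n → 0 < w n) (δ : ℝ) (hδ : 0 < δ)
    (h : ∀ p q : ℕ, 1 ≤ p → 1 ≤ q → ((p : ℝ) + q - 1) * w (p + q) ≤ δ * w p * w q) :
    ∀ p : ℕ, 1 ≤ p → w p ≤ (δ * w 1) ^ (p - 1) * w 1 / ((p - 1).factorial : ℝ) := by
  intro p hp
  induction p with
  | zero => omega
  | succ n ih =>
    rcases Nat.eq_or_lt_of_le hp with h1 | h1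
    · simp [← h1]
    · have hn : 1 ≤ n := by omega
      have ihn := ih hn
      have hkey := h n 1 hn le_rfl
      have hpos : (0 : ℝ) < n := by exact_mod_cast hn
      have hw1 : 0 < w 1 := hw 1 le_rfl
      have hstep : (n : ℝ) * w (n + 1) ≤ δ * w n * w 1 := by
        have : ((n : ℝ) + 1 - 1) = (n : ℝ) := by ring
        simpa [this] using hkey
      have hfac : (0 : ℝ) < ((n - 1).factorial : ℝ) := by positivity
      have hδw : 0 ≤ δ * w 1 := by positivity
      have hbound : δ * w n * w 1 ≤ (δ * w 1) ^ n * w 1 / ((n - 1).factorial : ℝ) := by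
        have : δ * w n * w 1 ≤ δ * ((δ * w 1) ^ (n - 1) * w 1 / ((n - 1).factorial : ℝ)) * w 1 := by
          have := mul_le_mul_of_nonneg_right (mul_le_mul_of_nonneg_left ihn hδ.le) hw1.le
          linarith
        calc δ * w n * w 1 ≤ δ * ((δ * w 1) ^ (n - 1) * w 1 / ((n - 1).factorial : ℝ)) * w 1 := this
          _ = (δ * w 1) ^ (n - 1) * (δ * w 1) * w 1 / ((n - 1).factorial : ℝ) := by ring
          _ = (δ * w 1) ^ n * w 1 / ((n - 1).factorial : ℝ) := by
              have h3 : n - 1 + 1 = n := by omega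
              rw [← pow_succ, h3]
      have hfacn : ((n).factorial : ℝ) = (n : ℝ) * ((n - 1).factorial : ℝ) := by
        have h4 : n = (n - 1) + 1 := by omega
        rw [h4, Nat.factorial_succ]
        push_cast
        ring
      have hfin : (n : ℝ) * w (n + 1) ≤ (δ * w 1) ^ n * w 1 / ((n - 1).factorial : ℝ) :=
        hstep.trans hbound
      have h2 : n + 1 - 1 = n := rfl
      rw [h2, le_div_iff₀ (by positivity), hfacn]
      calc w (n + 1) * ((n : ℝ) * ((n - 1).factorial : ℝ))
          = ((n : ℝ) * w (n + 1)) * ((n - 1).factorial : ℝ) := by ring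
        _ ≤ ((δ * w 1) ^ n * w 1 / ((n - 1).factorial : ℝ)) * ((n - 1).factorial : ℝ) :=
            mul_le_mul_of_nonneg_right hfin hfac.le
        _ = (δ * w 1) ^ n * w 1 := by field_simp
end

section
/- Let σ < −1 and ρ, s ∈ ℝ be real parameters, and define the weights w_n = (n!)^σ·2^{ρn}·(1 + n)^s for n ≥ 1. Then there exists a constant δ ≥ 1 such that for all integers p, q ≥ 1: (p + q − 1)·w_{p+q} ≤ δ·w_p·w_q. -/
open Real Filter

lemma add_le_choose (p q : ℕ) (hp : 1 ≤ p) (hq : 1 ≤ q) : p + q ≤ (p + q).choose p := by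
  induction p, hp using Nat.le_induction with
  | base => simp [Nat.choose_one_right]
  | succ n hn ih =>
    have h1 : (n + 1 + q) = (n + q) + 1 := by omega
    rw [h1, Nat.choose_succ_succ]
    have h2 : 0 < (n + q).choose (n + 1) := Nat.choose_pos (by omega)
    simp only [Nat.succ_eq_add_one] at *
    omega

lemma two_pow_le_choose : ∀ m n : ℕ, 2 * m ≤ n → 2 ^ m ≤ n.choose m := by
  intro m
  induction m with
  | zero => simp
  | succ k ih =>
    intro n hn
    obtain ⟨n', rfl⟩ : ∃ n', n = n' + 1 := ⟨n - 1, by omega⟩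
    rw [Nat.choose_succ_succ]
    have h1 : 2 ^ k ≤ n'.choose k := ih n' (by omega)
    have h2 : 2 ^ k ≤ n'.choose (k + 1) := by
      have e : (2 * k + 1).choose (2 * k + 1 - (k + 1)) = (2 * k + 1).choose (k + 1) :=
        Nat.choose_symm (by omega)
      have e2 : 2 * k + 1 - (k + 1) = k := by omega
      calc 2 ^ k ≤ (2 * k + 1).choose k := ih _ (by omega)
        _ = (2 * k + 1).choose (k + 1) := by rw [← e, e2]
        _ ≤ n'.choose (k + 1) := Nat.choose_le_choose _ (by omega)
    have : 2 ^ (k + 1) = 2 ^ k + 2 ^ k := by ring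
    simp only [Nat.succ_eq_add_one] at *
    omega

lemma bounded_aux (t ε : ℝ) (hε : 0 < ε) :
    ∃ b : ℝ, ∀ m : ℕ, (1 + (m : ℝ)) ^ t * (2 : ℝ) ^ (-(ε * m)) ≤ b := by
  set c := ε * Real.log 2 with hc
  have hc0 : 0 < c := mul_pos hε (Real.log_pos one_lt_two)
  have key : Tendsto (fun m : ℕ => (1 + (m : ℝ)) ^ t * (2 : ℝ) ^ (-(ε * m))) atTop (nhds 0) := by
    have h1 : Tendsto (fun m : ℕ => (1 : ℝ) + m) atTop atTop :=
      tendsto_atTop_add_const_left _ _ tendsto_natCast_atTop_atTop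
    have h2 := (tendsto_rpow_mul_exp_neg_mul_atTop_nhds_zero t c hc0).comp h1
    have h3 : Tendsto (fun m : ℕ => Real.exp c * ((1 + (m:ℝ)) ^ t * Real.exp (-c * (1 + m))))
        atTop (nhds (Real.exp c * 0)) := h2.const_mul _
    rw [mul_zero] at h3
    refine h3.congr fun m => ?_
    rw [Real.rpow_def_of_pos (by norm_num : (0:ℝ) < 2)]
    have e1 : Real.exp c * ((1 + (m:ℝ)) ^ t * Real.exp (-c * (1 + m)))
        = (1 + (m:ℝ)) ^ t * (Real.exp c * Real.exp (-c * (1 + m))) := by ring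
    rw [e1, ← Real.exp_add]
    congr 1
    rw [hc]
    ring
  obtain ⟨b, hb⟩ := key.bddAbove_range
  exact ⟨b, fun m => hb (Set.mem_range_self m)⟩

/-- The weight family `w n (σ, ρ, s) = (n!)^σ · 2^(ρn) · (1+n)^s` on positive integers,
with real exponents (real powers). -/
noncomputable def wgt (σ ρ s : ℝ) (n : ℕ) : ℝ :=
  ((n.factorial : ℝ)) ^ σ * (2 : ℝ) ^ (ρ * n) * (1 + (n : ℝ)) ^ s

lemma wgt_reduce (σ ρ s δ : ℝ) (p q : ℕ)
    (h : ((p:ℝ) + q - 1) * (((p+q).choose p : ℝ)) ^ σ * (1 + ((p:ℝ) + q)) ^ s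
        ≤ δ * ((1 + (p:ℝ)) ^ s * (1 + (q:ℝ)) ^ s)) :
    ((p : ℝ) + q - 1) * wgt σ ρ s (p + q) ≤ δ * wgt σ ρ s p * wgt σ ρ s q := by
  unfold wgt
  have hC : (0:ℝ) ≤ ((p+q).choose p : ℝ) := Nat.cast_nonneg _
  have hpf : (0:ℝ) ≤ (p.factorial : ℝ) := Nat.cast_nonneg _
  have hfact : (((p+q).factorial : ℕ) : ℝ)
      = ((p+q).choose p : ℝ) * (p.factorial : ℝ) * (q.factorial : ℝ) := by
    rw [← Nat.cast_mul, ← Nat.cast_mul]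
    congr 1
    have := Nat.choose_mul_factorial_mul_factorial (Nat.le_add_right p q)
    simpa using this.symm
  rw [hfact, Real.mul_rpow (by positivity) (by positivity), Real.mul_rpow hC hpf]
  push_cast
  have h2 : (2:ℝ) ^ (ρ * ((p:ℝ) + q)) = (2:ℝ) ^ (ρ * p) * (2:ℝ) ^ (ρ * q) := by
    rw [← Real.rpow_add two_pos]; ring_nf
  rw [h2]
  have hbr : (0:ℝ) ≤ (p.factorial:ℝ)^σ * (q.factorial:ℝ)^σ
      * ((2:ℝ)^(ρ*(p:ℝ)) * (2:ℝ)^(ρ*(q:ℝ))) := by positivity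
  have key := mul_le_mul_of_nonneg_left h hbr
  calc ((p:ℝ)+q-1) * (((p+q).choose p : ℝ)^σ * (p.factorial:ℝ)^σ * (q.factorial:ℝ)^σ
          * ((2:ℝ)^(ρ*(p:ℝ)) * (2:ℝ)^(ρ*(q:ℝ))) * (1+((p:ℝ)+q))^s)
      = ((p.factorial:ℝ)^σ * (q.factorial:ℝ)^σ * ((2:ℝ)^(ρ*(p:ℝ)) * (2:ℝ)^(ρ*(q:ℝ))))
          * (((p:ℝ)+q-1) * (((p+q).choose p : ℝ))^σ * (1+((p:ℝ)+q))^s) := by ring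
    _ ≤ ((p.factorial:ℝ)^σ * (q.factorial:ℝ)^σ * ((2:ℝ)^(ρ*(p:ℝ)) * (2:ℝ)^(ρ*(q:ℝ))))
          * (δ * ((1 + (p:ℝ)) ^ s * (1 + (q:ℝ)) ^ s)) := key
    _ = δ * ((p.factorial:ℝ)^σ * (2:ℝ)^(ρ*(p:ℝ)) * (1+(p:ℝ))^s)
          * ((q.factorial:ℝ)^σ * (2:ℝ)^(ρ*(q:ℝ)) * (1+(q:ℝ))^s) := by ring

/-- For `σ < -1` and arbitrary `ρ, s ∈ ℝ`, the weights `w n = (n!)^σ·2^(ρn)·(1+n)^s` satisfy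
the multiplicative weight inequality `(p+q-1)·w (p+q) ≤ δ·w p·w q` for some constant `δ ≥ 1`. -/
theorem weight_inequality_sigma_lt_neg_one (σ ρ s : ℝ) (hσ : σ < -1) :
    ∃ δ : ℝ, 1 ≤ δ ∧ ∀ p q : ℕ, 1 ≤ p → 1 ≤ q →
      ((p : ℝ) + q - 1) * wgt σ ρ s (p + q) ≤ δ * wgt σ ρ s p * wgt σ ρ s q := by
  have hε : 0 < -(σ+1) := by linarith
  rcases le_or_gt 0 s with hs | hs
  · refine ⟨1, le_refl 1, fun p q hp hq => ?_⟩
    apply wgt_reduce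
    set C : ℝ := ((p+q).choose p : ℝ) with hCdef
    have hC1 : (p:ℝ) + q ≤ C := by
      have := add_le_choose p q hp hq
      rw [hCdef]; exact_mod_cast this
    have hp1 : (1:ℝ) ≤ (p:ℝ) := by exact_mod_cast hp
    have hq1 : (1:ℝ) ≤ (q:ℝ) := by exact_mod_cast hq
    have hCge1 : (1:ℝ) ≤ C := by linarith
    have hA : ((p:ℝ) + q - 1) * C ^ σ ≤ 1 := by
      have h1 : C ^ σ ≤ C ^ (-1:ℝ) :=
        Real.rpow_le_rpow_of_exponent_le hCge1 (by linarith)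
      rw [Real.rpow_neg_one] at h1
      have h2 : ((p:ℝ) + q - 1) * C ^ σ ≤ ((p:ℝ) + q - 1) * C⁻¹ := by
        apply mul_le_mul_of_nonneg_left h1 (by linarith)
      have h3 : ((p:ℝ) + q - 1) * C⁻¹ ≤ C * C⁻¹ := by
        apply mul_le_mul_of_nonneg_right (by linarith) (by positivity)
      rw [mul_inv_cancel₀ (by linarith : C ≠ 0)] at h3
      linarith
    have hB : (1 + ((p:ℝ) + q)) ^ s ≤ (1 + (p:ℝ)) ^ s * (1 + (q:ℝ)) ^ s := by
      rw [← Real.mul_rpow (by linarith) (by linarith)]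
      apply Real.rpow_le_rpow (by linarith) (by nlinarith) hs
    have := mul_le_mul hA hB (by positivity) zero_le_one
    calc ((p:ℝ) + q - 1) * C ^ σ * (1 + ((p:ℝ) + q)) ^ s
        ≤ 1 * ((1 + (p:ℝ)) ^ s * (1 + (q:ℝ)) ^ s) := this
      _ = 1 * ((1 + (p:ℝ)) ^ s * (1 + (q:ℝ)) ^ s) := by ring
  · obtain ⟨b, hb⟩ := bounded_aux (-s) (-(σ+1)) hε
    refine ⟨max 1 b, le_max_left _ _, fun p q hp hq => ?_⟩
    apply wgt_reduce
    set C : ℝ := ((p+q).choose p : ℝ) with hCdef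
    set m : ℕ := min p q with hmdef
    have hC1 : (p:ℝ) + q ≤ C := by
      have := add_le_choose p q hp hq
      rw [hCdef]; exact_mod_cast this
    have hC2 : (2:ℝ) ^ (m:ℕ) ≤ C := by
      have h0 : (p+q).choose p = (p+q).choose m := by
        rcases Nat.le_total p q with h | h
        · rw [hmdef, Nat.min_eq_left h]
        · rw [hmdef, Nat.min_eq_right h]
          have := Nat.choose_symm (Nat.le_add_right p q : p ≤ p + q)
          simpa using this.symm
      have := two_pow_le_choose m (p+q) (by omega)
      rw [hCdef, h0]
      exact_mod_cast this
    have hp1 : (1:ℝ) ≤ (p:ℝ) := by exact_mod_cast hp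
    have hq1 : (1:ℝ) ≤ (q:ℝ) := by exact_mod_cast hq
    have hm1 : (1:ℝ) ≤ (m:ℝ) := by
      have : 1 ≤ m := by omega
      exact_mod_cast this
    have hCge1 : (1:ℝ) ≤ C := by linarith
    have hCpos : (0:ℝ) < C := by linarith
    -- bound on the (1+·)^s part
    have hmin : (1 + (p:ℝ)) * (1 + (q:ℝ)) ≤ (1 + ((p:ℝ) + q)) * (1 + (m:ℝ)) := by
      have hnat : p * q ≤ m * (p + q) := by
        rcases Nat.le_total p q with h | h
        · rw [hmdef, Nat.min_eq_left h]; nlinarith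
        · rw [hmdef, Nat.min_eq_right h]; nlinarith
      have : (p:ℝ) * q ≤ (m:ℝ) * ((p:ℝ) + q) := by exact_mod_cast hnat
      nlinarith
    have hS : (1 + ((p:ℝ) + q)) ^ s
        ≤ (1 + (p:ℝ)) ^ s * (1 + (q:ℝ)) ^ s * (1 + (m:ℝ)) ^ (-s) := by
      have hxpos : (0:ℝ) < (1 + (p:ℝ)) * (1 + (q:ℝ)) / (1 + (m:ℝ)) := by positivity
      have hxy : (1 + (p:ℝ)) * (1 + (q:ℝ)) / (1 + (m:ℝ)) ≤ 1 + ((p:ℝ) + q) := by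
        rw [div_le_iff₀ (by linarith)]
        linarith
      have h1 := Real.rpow_le_rpow_of_nonpos hxpos hxy (le_of_lt hs)
      have h2 : ((1 + (p:ℝ)) * (1 + (q:ℝ)) / (1 + (m:ℝ))) ^ s
          = (1 + (p:ℝ)) ^ s * (1 + (q:ℝ)) ^ s * (1 + (m:ℝ)) ^ (-s) := by
        rw [Real.div_rpow (by positivity) (by linarith),
            Real.mul_rpow (by linarith) (by linarith),
            Real.rpow_neg (by linarith), div_eq_mul_inv]
      rw [h2] at h1
      exact h1
    -- split C^σ
    have hCsplit : C ^ σ = C ^ (-1:ℝ) * C ^ (σ + 1) := by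
      rw [← Real.rpow_add hCpos]; norm_num
    have hA : ((p:ℝ) + q - 1) * C ^ (-1:ℝ) ≤ 1 := by
      rw [Real.rpow_neg_one]
      have h3 : ((p:ℝ) + q - 1) * C⁻¹ ≤ C * C⁻¹ := by
        apply mul_le_mul_of_nonneg_right (by linarith) (by positivity)
      rw [mul_inv_cancel₀ (ne_of_gt hCpos)] at h3
      exact h3
    have hB : C ^ (σ + 1) ≤ (2:ℝ) ^ (-(-(σ+1) * (m:ℝ))) := by
      have h1 := Real.rpow_le_rpow_of_nonpos (by positivity : (0:ℝ) < (2:ℝ)^(m:ℕ)) hC2 (by linarith : σ + 1 ≤ 0)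
      have h2 : ((2:ℝ) ^ (m:ℕ)) ^ (σ+1) = (2:ℝ) ^ (-(-(σ+1) * (m:ℝ))) := by
        rw [← Real.rpow_natCast (2:ℝ) m, ← Real.rpow_mul (by norm_num : (0:ℝ) ≤ 2)]
        congr 1; ring
      rw [h2] at h1
      exact h1
    have hbm := hb m
    -- assemble
    have hfinal : ((p:ℝ) + q - 1) * C ^ σ * (1 + (m:ℝ)) ^ (-s) ≤ max 1 b := by
      have step1 : ((p:ℝ) + q - 1) * C ^ σ * (1 + (m:ℝ)) ^ (-s)
          = (((p:ℝ) + q - 1) * C ^ (-1:ℝ)) * (C ^ (σ+1) * (1 + (m:ℝ)) ^ (-s)) := by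
        rw [hCsplit]; ring
      have step2 : C ^ (σ+1) * (1 + (m:ℝ)) ^ (-s)
          ≤ (2:ℝ) ^ (-(-(σ+1) * (m:ℝ))) * (1 + (m:ℝ)) ^ (-s) := by
        apply mul_le_mul_of_nonneg_right hB (by positivity)
      have step3 : (2:ℝ) ^ (-(-(σ+1) * (m:ℝ))) * (1 + (m:ℝ)) ^ (-s) ≤ b := by
        have := hbm
        linarith [hbm]
      have hnn : (0:ℝ) ≤ C ^ (σ+1) * (1 + (m:ℝ)) ^ (-s) := by positivity
      calc ((p:ℝ) + q - 1) * C ^ σ * (1 + (m:ℝ)) ^ (-s)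
          = (((p:ℝ) + q - 1) * C ^ (-1:ℝ)) * (C ^ (σ+1) * (1 + (m:ℝ)) ^ (-s)) := step1
        _ ≤ 1 * (C ^ (σ+1) * (1 + (m:ℝ)) ^ (-s)) := by
            apply mul_le_mul_of_nonneg_right hA hnn
        _ = C ^ (σ+1) * (1 + (m:ℝ)) ^ (-s) := by ring
        _ ≤ (2:ℝ) ^ (-(-(σ+1) * (m:ℝ))) * (1 + (m:ℝ)) ^ (-s) := step2
        _ ≤ b := step3
        _ ≤ max 1 b := le_max_right _ _
    have hCσnn : (0:ℝ) ≤ ((p:ℝ) + q - 1) * C ^ σ := by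
      have : (0:ℝ) ≤ C ^ σ := Real.rpow_nonneg (le_of_lt hCpos) σ
      nlinarith
    calc ((p:ℝ) + q - 1) * C ^ σ * (1 + ((p:ℝ) + q)) ^ s
        ≤ ((p:ℝ) + q - 1) * C ^ σ * ((1 + (p:ℝ)) ^ s * (1 + (q:ℝ)) ^ s * (1 + (m:ℝ)) ^ (-s)) :=
          mul_le_mul_of_nonneg_left hS hCσnn
      _ = (((p:ℝ) + q - 1) * C ^ σ * (1 + (m:ℝ)) ^ (-s)) * ((1 + (p:ℝ)) ^ s * (1 + (q:ℝ)) ^ s) := by ring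
      _ ≤ max 1 b * ((1 + (p:ℝ)) ^ s * (1 + (q:ℝ)) ^ s) := by
          apply mul_le_mul_of_nonneg_right hfinal (by positivity)
end

section
/- Let σ, σ', ρ, ρ', s, s' be real parameters with σ < σ'. Then there exists a constant δ > 0 such that for all integers p, q ≥ 1: (p + q − 1)·(p+q)!^σ·2^{ρ(p+q)}·(1 + p + q)^s ≤ δ·(p!)^{σ'}·2^{ρ'p}·(1 + p)^{s'}·(q!)^{σ'}·2^{ρ'q}·(1 + q)^{s'}. -/
/-!
Write `(p+q)! = C(p+q, q)·p!·q!` with `1 ≤ C(p+q, q) ≤ 2^(p+q)`. Since also `1 ≤ 1 + n ≤ 2^n`,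
every factor of the left-hand side other than `(p!·q!)^σ` is at most `2^(D(p+q))` for a constant
`D`, and likewise every factor of `w_r(σ', ρ', s')` other than `(r!)^σ'` is at least `2^(-D'r)`.
It remains to absorb `2^((D + D')r)` into `(r!)^(σ' - σ)`, which grows superexponentially because
`σ' > σ`.
-/

open Nat

lemma wgt_pos (σ ρ s : ℝ) (n : ℕ) : 0 < wgt σ ρ s n := by
  unfold wgt; positivity

lemma rpow_le_two_rpow_abs_mul {x m : ℝ} (t : ℝ) (hx : 1 ≤ x) (hm : x ≤ 2 ^ m) :
    x ^ t ≤ (2 : ℝ) ^ (|t| * m) :=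
  calc x ^ t ≤ x ^ |t| := Real.rpow_le_rpow_of_exponent_le hx (le_abs_self t)
    _ ≤ ((2 : ℝ) ^ m) ^ |t| := Real.rpow_le_rpow (by linarith) hm (abs_nonneg t)
    _ = (2 : ℝ) ^ (|t| * m) := by rw [← Real.rpow_mul zero_le_two, mul_comm]

lemma two_rpow_neg_abs_mul_le_rpow {x m : ℝ} (t : ℝ) (hx : 1 ≤ x) (hm : x ≤ 2 ^ m) :
    (2 : ℝ) ^ (-(|t| * m)) ≤ x ^ t :=
  calc (2 : ℝ) ^ (-(|t| * m)) = ((2 : ℝ) ^ m) ^ (-|t|) := by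
        rw [← Real.rpow_mul zero_le_two]; ring_nf
    _ ≤ x ^ (-|t|) := Real.rpow_le_rpow_of_nonpos (by linarith) hm (neg_nonpos.2 (abs_nonneg t))
    _ ≤ x ^ t := Real.rpow_le_rpow_of_exponent_le hx (neg_abs_le t)

lemma one_add_natCast_le_two_rpow (n : ℕ) : 1 + (n : ℝ) ≤ (2 : ℝ) ^ (n : ℝ) := by
  rw [Real.rpow_natCast, add_comm]
  exact_mod_cast Nat.lt_two_pow_self

lemma choose_le_two_rpow (n k : ℕ) : (n.choose k : ℝ) ≤ (2 : ℝ) ^ (n : ℝ) := by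
  rw [Real.rpow_natCast]
  exact_mod_cast Nat.choose_le_two_pow n k

lemma factorial_add_rpow_le (σ : ℝ) (p q : ℕ) :
    (((p + q)! : ℕ) : ℝ) ^ σ ≤ (2 : ℝ) ^ (|σ| * ((p : ℝ) + q)) * ((p ! : ℝ) ^ σ * (q ! : ℝ) ^ σ) := by
  have hchoose : 1 ≤ ((p + q).choose q : ℝ) := by
    exact_mod_cast Nat.choose_pos (Nat.le_add_left q p)
  have hfac : (((p + q)! : ℕ) : ℝ) = ((p + q).choose q : ℝ) * p ! * q ! := by
    exact_mod_cast (Nat.add_choose_mul_factorial_mul_factorial p q).symm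
  rw [hfac, Real.mul_rpow (by positivity) (by positivity),
    Real.mul_rpow (by positivity) (by positivity), mul_assoc]
  gcongr
  exact rpow_le_two_rpow_abs_mul σ hchoose (by exact_mod_cast choose_le_two_rpow (p + q) q)

lemma wgt_le_two_rpow_mul (σ ρ s : ℝ) (n : ℕ) :
    wgt σ ρ s n ≤ (2 : ℝ) ^ ((|ρ| + |s|) * n) * (n ! : ℝ) ^ σ := by
  have hρ : (2 : ℝ) ^ (ρ * n) ≤ (2 : ℝ) ^ (|ρ| * n) :=
    Real.rpow_le_rpow_of_exponent_le one_le_two (by gcongr; exact le_abs_self ρ)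
  have hs : (1 + (n : ℝ)) ^ s ≤ (2 : ℝ) ^ (|s| * n) :=
    rpow_le_two_rpow_abs_mul s (by simp) (one_add_natCast_le_two_rpow n)
  calc wgt σ ρ s n ≤ (n ! : ℝ) ^ σ * (2 : ℝ) ^ (|ρ| * n) * (2 : ℝ) ^ (|s| * n) := by
        unfold wgt; gcongr
    _ = (2 : ℝ) ^ ((|ρ| + |s|) * n) * (n ! : ℝ) ^ σ := by
        rw [add_mul, Real.rpow_add two_pos]; ring

lemma two_rpow_neg_mul_le_wgt (σ ρ s : ℝ) (n : ℕ) :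
    (2 : ℝ) ^ (-((|ρ| + |s|) * n)) * (n ! : ℝ) ^ σ ≤ wgt σ ρ s n := by
  have hρ : (2 : ℝ) ^ (-(|ρ| * n)) ≤ (2 : ℝ) ^ (ρ * n) :=
    Real.rpow_le_rpow_of_exponent_le one_le_two
      (by rw [← neg_mul]; gcongr; exact neg_abs_le ρ)
  have hs : (2 : ℝ) ^ (-(|s| * n)) ≤ (1 + (n : ℝ)) ^ s :=
    two_rpow_neg_abs_mul_le_rpow s (by simp) (one_add_natCast_le_two_rpow n)
  calc (2 : ℝ) ^ (-((|ρ| + |s|) * n)) * (n ! : ℝ) ^ σ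
        = (n ! : ℝ) ^ σ * (2 : ℝ) ^ (-(|ρ| * n)) * (2 : ℝ) ^ (-(|s| * n)) := by
        rw [add_mul, neg_add, Real.rpow_add two_pos]; ring
    _ ≤ wgt σ ρ s n := by unfold wgt; gcongr

lemma add_sub_one_mul_wgt_add_le (σ ρ s : ℝ) (p q : ℕ) :
    ((p : ℝ) + q - 1) * wgt σ ρ s (p + q) ≤
      (2 : ℝ) ^ ((1 + |σ| + |ρ| + |s|) * ((p : ℝ) + q)) * ((p ! : ℝ) ^ σ * (q ! : ℝ) ^ σ) := by
  have hlin : (p : ℝ) + q - 1 ≤ (2 : ℝ) ^ ((p : ℝ) + q) := by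
    have := one_add_natCast_le_two_rpow (p + q)
    push_cast at this
    linarith
  have hwgt := wgt_le_two_rpow_mul σ ρ s (p + q)
  push_cast at hwgt
  calc ((p : ℝ) + q - 1) * wgt σ ρ s (p + q)
      ≤ (2 : ℝ) ^ ((p : ℝ) + q) * ((2 : ℝ) ^ ((|ρ| + |s|) * ((p : ℝ) + q)) *
          ((2 : ℝ) ^ (|σ| * ((p : ℝ) + q)) * ((p ! : ℝ) ^ σ * (q ! : ℝ) ^ σ))) := by
        gcongr
        · exact (wgt_pos σ ρ s _).le
        · exact hwgt.trans (by gcongr; exact_mod_cast factorial_add_rpow_le σ p q)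
    _ = (2 : ℝ) ^ ((1 + |σ| + |ρ| + |s|) * ((p : ℝ) + q)) * ((p ! : ℝ) ^ σ * (q ! : ℝ) ^ σ) := by
        rw [← mul_assoc, ← mul_assoc, ← Real.rpow_add two_pos, ← Real.rpow_add two_pos]
        ring_nf

lemma exists_two_rpow_mul_le_mul_factorial_rpow (C : ℝ) {ε : ℝ} (hε : 0 < ε) :
    ∃ E : ℝ, 0 < E ∧ ∀ r : ℕ, (2 : ℝ) ^ (C * r) ≤ E * (r ! : ℝ) ^ ε := by
  set A := (2 : ℝ) ^ (C / ε)
  have hA : 0 < A := by positivity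
  refine ⟨Real.exp A ^ ε, by positivity, fun r => ?_⟩
  have hexp : A ^ r ≤ Real.exp A * r ! := by
    have := Real.pow_div_factorial_le_exp A hA.le r
    rwa [div_le_iff₀ (by positivity)] at this
  have hpow : (A ^ r) ^ ε = (2 : ℝ) ^ (C * r) := by
    rw [← Real.rpow_natCast, ← Real.rpow_mul zero_le_two, ← Real.rpow_mul zero_le_two]
    congr 1
    field_simp
  calc (2 : ℝ) ^ (C * r) = (A ^ r) ^ ε := hpow.symm
    _ ≤ (Real.exp A * r !) ^ ε := by gcongr
    _ = Real.exp A ^ ε * (r ! : ℝ) ^ ε := Real.mul_rpow (by positivity) (by positivity)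

lemma exists_two_rpow_mul_factorial_rpow_le_wgt {σ σ' : ℝ} (hσ : σ < σ') (C ρ s : ℝ) :
    ∃ E : ℝ, 0 < E ∧ ∀ r : ℕ, (2 : ℝ) ^ (C * r) * (r ! : ℝ) ^ σ ≤ E * wgt σ' ρ s r := by
  obtain ⟨E, hE, hbound⟩ :=
    exists_two_rpow_mul_le_mul_factorial_rpow (C + (|ρ| + |s|)) (sub_pos.2 hσ)
  refine ⟨E, hE, fun r => ?_⟩
  calc (2 : ℝ) ^ (C * r) * (r ! : ℝ) ^ σ
      = (2 : ℝ) ^ ((C + (|ρ| + |s|)) * r) * (r ! : ℝ) ^ σ * (2 : ℝ) ^ (-((|ρ| + |s|) * r)) := by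
        rw [mul_right_comm, ← Real.rpow_add two_pos]
        ring_nf
    _ ≤ E * (r ! : ℝ) ^ (σ' - σ) * (r ! : ℝ) ^ σ * (2 : ℝ) ^ (-((|ρ| + |s|) * r)) := by
        gcongr
        exact hbound r
    _ = E * ((2 : ℝ) ^ (-((|ρ| + |s|) * r)) * (r ! : ℝ) ^ σ') := by
        rw [mul_assoc E, ← Real.rpow_add (by positivity), sub_add_cancel]; ring
    _ ≤ E * wgt σ' ρ s r := by gcongr; exact two_rpow_neg_mul_le_wgt σ' ρ s r

/-- Mixed multiplicative weight inequality for `σ < σ'`: for some constant `δ > 0`,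
`(p+q-1)·w (p+q) (σ,ρ,s) ≤ δ·w p (σ',ρ',s')·w q (σ',ρ',s')` for all `p, q ≥ 1` and arbitrary
`ρ, ρ', s, s'`. -/
theorem weight_inequality_mixed_sigma (σ σ' ρ ρ' s s' : ℝ) (hσ : σ < σ') :
    ∃ δ : ℝ, 0 < δ ∧ ∀ p q : ℕ, 1 ≤ p → 1 ≤ q →
      ((p : ℝ) + q - 1) * wgt σ ρ s (p + q) ≤ δ * wgt σ' ρ' s' p * wgt σ' ρ' s' q := by
  set D := 1 + |σ| + |ρ| + |s|
  obtain ⟨E, hE, hbound⟩ := exists_two_rpow_mul_factorial_rpow_le_wgt hσ D ρ' s'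
  refine ⟨E * E, by positivity, fun p q _ _ => ?_⟩
  calc ((p : ℝ) + q - 1) * wgt σ ρ s (p + q)
      ≤ (2 : ℝ) ^ (D * ((p : ℝ) + q)) * ((p ! : ℝ) ^ σ * (q ! : ℝ) ^ σ) :=
        add_sub_one_mul_wgt_add_le σ ρ s p q
    _ = ((2 : ℝ) ^ (D * p) * (p ! : ℝ) ^ σ) * ((2 : ℝ) ^ (D * q) * (q ! : ℝ) ^ σ) := by
        rw [mul_add, Real.rpow_add two_pos]; ring
    _ ≤ (E * wgt σ' ρ' s' p) * (E * wgt σ' ρ' s' q) := by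
        exact mul_le_mul (hbound p) (hbound q) (by positivity)
          (mul_pos hE (wgt_pos σ' ρ' s' p)).le
    _ = E * E * wgt σ' ρ' s' p * wgt σ' ρ' s' q := by ring
end
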